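/- arXiv:2412.12659 — 2 statements merged into one kernel-verified Lean document; each statement's English description precedes it below -/
import Mathlib

section
/- Let k ≥ 3 and G = C(2k+1; {1,3}). Then the toughness of G equals (k+1)/(k−1). -/
open SimpleGraph

def circGraph (n : ℕ) (s : Set (ZMod n)) : SimpleGraph (ZMod n) where
  Adj i j := i ≠ j ∧ (i - j ∈ s ∨ j - i ∈ s)
  symm := ⟨fun i j h => ⟨h.1.symm, h.2.symm⟩⟩
  loopless := ⟨fun i h => h.1 rfl⟩

/-- Number of connected components of `G - S`. -/
noncomputable def numComp {V : Type*} (G : SimpleGraph V) (S : Set V) : ℕ :=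
  Nat.card ((G.induce Sᶜ).ConnectedComponent)

/-- `S` is a vertex cut: removing `S` leaves a disconnected graph. -/
def IsVertexCut {V : Type*} (G : SimpleGraph V) (S : Set V) : Prop :=
  1 < numComp G S

/-- Toughness: minimum of |S| / c(G - S) over vertex cuts `S`. -/
noncomputable def toughness {V : Type*} (G : SimpleGraph V) : ℝ :=
  sInf {x : ℝ | ∃ S : Set V, IsVertexCut G S ∧ x = (S.ncard : ℝ) / (numComp G S : ℝ)}

def MinimallyTough {V : Type*} (G : SimpleGraph V) (t : ℝ) : Prop :=
  toughness G = t ∧ ∀ e ∈ G.edgeSet, toughness (G.deleteEdges {e}) < t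

/-!
Upper bound: deleting all vertices except the even residues `0, 2, …, 2k - 2` removes `k + 1`
vertices and leaves `k - 1` components, because the only edge among the kept vertices is
`2k - 2 ~ 0` (difference `3`).

Lower bound: let `R` be the complement of a cut `S` with `c ≥ 2` components. Call `x ∈ R` an exit
if the next vertex of `R` after `x` (going around the cycle) lies in another component; every
component has an exit, so `c ≤ #exits`. Adjacency at distances `1` and `3` forces an exit `x` to
have `x + 1, x + 3 ∉ R`, and `x - 1 ∉ R` or `x + 2 ∉ R`. The successors of the exits lie in `S`,
and since `2` is invertible modulo `2k + 1`, `S` contains at least two further vertices. Hence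
`c + 2 ≤ |S|`, and with `c + |S| ≤ 2k + 1` this gives `|S| / c ≥ (k + 1) / (k - 1)`.
-/

lemma ZMod.natCast_eq_natCast_iff_of_lt {n a b : ℕ} (ha : a < n) (hb : b < 2 * n) :
    (a : ZMod n) = b ↔ a = b ∨ a + n = b := by
  rw [ZMod.natCast_eq_natCast_iff', Nat.mod_eq_of_lt ha]
  rcases lt_or_ge b n with h | h
  · rw [Nat.mod_eq_of_lt h]; omega
  · rw [Nat.mod_eq_sub_mod h, Nat.mod_eq_of_lt (by omega)]; omega

lemma ZMod.ofNat_ne_zero_of_lt {n a : ℕ} [a.AtLeastTwo] (ha : a < n) :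
    (OfNat.ofNat a : ZMod n) ≠ 0 := by
  intro h
  have := congrArg ZMod.val h
  rw [ZMod.val_ofNat_of_lt ha, ZMod.val_zero] at this
  exact absurd this (NeZero.ne _)

lemma ZMod.eq_univ_of_add_mem {n : ℕ} [NeZero n] {T : Set (ZMod n)} {d : ZMod n} (hd : IsUnit d)
    {t : ZMod n} (ht : t ∈ T) (hT : ∀ x ∈ T, x + d ∈ T) : T = Set.univ := by
  obtain ⟨u, rfl⟩ := hd
  have hmul : ∀ j : ℕ, t + j * u ∈ T := by
    intro j
    induction j with
    | zero => simpa using ht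
    | succ j ih => simpa [add_mul, add_assoc] using hT _ ih
  refine Set.eq_univ_of_forall fun y => ?_
  convert hmul (↑u⁻¹ * (y - t) : ZMod n).val
  calc y = t + (y - t) * (↑u⁻¹ * ↑u) := by simp
    _ = _ := by rw [ZMod.natCast_zmod_val]; ring

lemma card_connectedComponent_eq_of_fibers {V β : Type*} {G : SimpleGraph V} {f : V → β}
    (hf : Function.Surjective f) (hadj : ∀ u v, G.Adj u v → f u = f v)
    (hreach : ∀ u v, f u = f v → G.Reachable u v) :
    Nat.card G.ConnectedComponent = Nat.card β := by
  have hwalk : ∀ u v (p : G.Walk u v), f u = f v := by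
    intro u v p
    induction p with
    | nil => rfl
    | cons h _ ih => exact (hadj _ _ h).trans ih
  let g : G.ConnectedComponent → β := ConnectedComponent.lift f fun u v p _ => hwalk u v p
  refine Nat.card_congr (Equiv.ofBijective g ⟨fun C D hCD => ?_, fun b => ?_⟩)
  · induction C using ConnectedComponent.ind
    induction D using ConnectedComponent.ind
    exact ConnectedComponent.sound (hreach _ _ hCD)
  · obtain ⟨v, rfl⟩ := hf b
    exact ⟨G.connectedComponentMk v, rfl⟩

lemma numComp_add_ncard_le {V : Type*} [Finite V] (G : SimpleGraph V) (S : Set V) :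
    numComp G S + S.ncard ≤ Nat.card V := by
  have hc : numComp G S ≤ Sᶜ.ncard := by
    rw [← Nat.card_coe_set_eq]
    exact Nat.card_le_card_of_surjective _ Quot.mk_surjective
  have := Set.ncard_add_ncard_compl S
  omega

section Exits

variable {n : ℕ} {G : SimpleGraph (ZMod n)} {R : Set (ZMod n)}

/-- `x ∈ R` is an exit if the first vertex `x + m` of `R` after `x` (cyclically) lies in another
component of `G.induce R`. -/
def IsExit (G : SimpleGraph (ZMod n)) (R : Set (ZMod n)) (x : ZMod n) : Prop :=
  ∃ m : ℕ, (∀ j : ℕ, 0 < j → j < m → x + j ∉ R) ∧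
    ∃ u v : R, (u : ZMod n) = x ∧ (v : ZMod n) = x + m ∧ ¬ (G.induce R).Reachable u v

lemma IsExit.mem {x : ZMod n} (h : IsExit G R x) : x ∈ R := by
  obtain ⟨-, -, u, -, rfl, -⟩ := h
  exact u.2

lemma exists_isExit_reachable [NeZero n] {u v : R} (huv : ¬ (G.induce R).Reachable u v) :
    ∃ w : R, IsExit G R w ∧ (G.induce R).Reachable u w := by
  classical
  -- `u + t` is the first vertex after `u` that lies in `R` outside the component of `u`, and
  -- `u + s` the last vertex of `R` before it; then `u + s` is an exit.
  let P : ℕ → Prop := fun t => ∃ w : R, (w : ZMod n) = u + t ∧ ¬ (G.induce R).Reachable u w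
  have hP : ∃ t, P t := ⟨(v - u : ZMod n).val, v, by simp, huv⟩
  obtain ⟨w, hw, hnr⟩ := Nat.find_spec hP
  set t := Nat.find hP
  have ht : t ≠ 0 := by
    rintro h0
    exact hnr (by rw [show w = u from Subtype.ext (by simp [hw, h0])])
  let Q : ℕ → Prop := fun s => (u : ZMod n) + s ∈ R
  set s := Nat.findGreatest Q (t - 1)
  have hsR : (u : ZMod n) + s ∈ R := Nat.findGreatest_spec (P := Q) (Nat.zero_le _) (by simp [Q])
  have hst : s < t := by have := Nat.findGreatest_le (P := Q) (t - 1); omega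
  have hus : (G.induce R).Reachable u ⟨_, hsR⟩ := by
    by_contra h
    exact absurd (Nat.find_min' hP ⟨_, rfl, h⟩) (by omega)
  refine ⟨⟨_, hsR⟩, ⟨t - s, fun j hj hjm => ?_, _, w, rfl, ?_, fun h => hnr (hus.trans h)⟩, hus⟩
  · have := Nat.findGreatest_is_greatest (show s < s + j by omega) (show s + j ≤ t - 1 by omega)
    simpa [Q, add_assoc] using this
  · rw [hw, Nat.cast_sub hst.le]
    ring

lemma card_connectedComponent_le_ncard_isExit [NeZero n]
    (h : 1 < Nat.card (G.induce R).ConnectedComponent) :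
    Nat.card (G.induce R).ConnectedComponent ≤ {x | IsExit G R x}.ncard := by
  rw [← Nat.card_coe_set_eq]
  refine Nat.card_le_card_of_surjective
    (fun x => (G.induce R).connectedComponentMk ⟨x, x.2.mem⟩) fun K => ?_
  have : Nontrivial (G.induce R).ConnectedComponent := Finite.one_lt_card_iff_nontrivial.mp h
  obtain ⟨K', hK'⟩ := exists_ne K
  induction K using ConnectedComponent.ind with | h v => ?_
  induction K' using ConnectedComponent.ind with | h u => ?_
  obtain ⟨w, hw, hvw⟩ := exists_isExit_reachable (G := G) (u := v) (v := u)
    fun h => hK' (ConnectedComponent.sound h).symm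
  exact ⟨⟨w, hw⟩, (ConnectedComponent.sound hvw).symm⟩

end Exits

lemma circGraph_adj_of_sub_mem {n : ℕ} {s : Set (ZMod n)} {a b : ZMod n} (h : b - a ∈ s)
    (h0 : b - a ≠ 0) : (circGraph n s).Adj a b :=
  ⟨fun hab => h0 (by rw [hab, sub_self]), Or.inr h⟩

lemma IsExit.shape_circGraph {n : ℕ} (hn : 3 < n) {R : Set (ZMod n)} {x : ZMod n}
    (h : IsExit (circGraph n {1, 3}) R x) :
    x + 1 ∉ R ∧ x + 3 ∉ R ∧ (x - 1 ∉ R ∨ x + 2 ∉ R) := by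
  have : Fact (1 < n) := ⟨by omega⟩
  obtain ⟨m, hgap, u, v, hu, hv, huv⟩ := h
  have hreach : ∀ a b : R, (b : ZMod n) - a = 1 ∨ (b : ZMod n) - a = 3 →
      ((circGraph n {1, 3}).induce R).Reachable a b := by
    rintro a b (hab | hab) <;> refine Adj.reachable (circGraph_adj_of_sub_mem ?_ ?_) <;>
      simp [hab, ZMod.ofNat_ne_zero_of_lt hn]
  have hvu : (v : ZMod n) - u = m := by rw [hu, hv]; ring
  match m, hgap, hvu with
  | 0, _, hvu =>
    obtain rfl : v = u := Subtype.ext (sub_eq_zero.mp (by simpa using hvu))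
    exact absurd (Reachable.refl v) huv
  | 1, _, hvu => exact absurd (hreach u v (Or.inl (by simpa using hvu))) huv
  | 3, _, hvu => exact absurd (hreach u v (Or.inr (by simpa using hvu))) huv
  | 2, hgap, hvu =>
    refine ⟨by simpa using hgap 1 one_pos one_lt_two, fun h3 => ?_, Or.inl fun h1 => ?_⟩
    · exact huv ((hreach u ⟨_, h3⟩ (Or.inr (by simp [hu]))).trans
        (hreach v ⟨_, h3⟩ (Or.inl (by simp [hv]; ring))).symm)
    · exact huv ((hreach ⟨_, h1⟩ u (Or.inl (by simp [hu]))).symm.trans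
        (hreach ⟨_, h1⟩ v (Or.inr (by simp [hv]; ring))))
  | m + 4, hgap, _ =>
    exact ⟨by simpa using hgap 1 (by omega) (by omega), by simpa using hgap 3 (by omega) (by omega),
      Or.inr (by simpa using hgap 2 (by omega) (by omega))⟩

lemma ncard_add_two_le_ncard_compl {n : ℕ} (hn : Odd n) {R X : Set (ZMod n)} (hX : X.Nonempty)
    (hXR : X ⊆ R) (hshape : ∀ x ∈ X, x + 1 ∉ R ∧ x + 3 ∉ R ∧ (x - 1 ∉ R ∨ x + 2 ∉ R)) :
    X.ncard + 2 ≤ Rᶜ.ncard := by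
  have : NeZero n := ⟨hn.pos.ne'⟩
  have htwo : IsUnit (2 : ZMod n) := by
    simpa using (ZMod.isUnit_iff_coprime 2 n).mpr (Nat.coprime_two_left.mpr hn)
  set A := (· + 1) '' X
  have hAmem : ∀ z, z ∈ A ↔ z - 1 ∈ X := fun z => by simp [A, Set.image_add_right, sub_eq_add_neg]
  have hA : A ⊆ Rᶜ := by rintro _ ⟨x, hx, rfl⟩; exact (hshape x hx).1
  have hAcard : A.ncard = X.ncard := Set.ncard_image_of_injective _ (add_left_injective 1)
  suffices 1 < (Rᶜ \ A).ncard by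
    have := Set.ncard_sdiff_add_ncard_of_subset hA
    omega
  rw [Set.one_lt_ncard_iff]
  obtain ⟨x₀, hx₀⟩ := hX
  -- Two vertices of `Rᶜ` that are not successors of points of `X`: `x + 2, x + 3` if some gap
  -- after `x ∈ X` is long; otherwise `A ± 2 ⊆ Rᶜ`, and `Rᶜ \ A` cannot be a single point, for then
  -- `Rᶜ` would be closed under `+ 2`, which generates `ZMod n`.
  by_cases hgap : ∃ x ∈ X, x + 2 ∉ R
  · obtain ⟨x, hx, hx2⟩ := hgap
    refine ⟨x + 2, x + 3, ⟨hx2, ?_⟩, ⟨(hshape x hx).2.1, ?_⟩, fun h => ?_⟩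
    · rw [hAmem, show x + 2 - 1 = x + 1 by ring]
      exact fun h => (hshape x hx).1 (hXR h)
    · rw [hAmem, show x + 3 - 1 = x + 2 by ring]
      exact fun h => hx2 (hXR h)
    · have : x + 1 = x := by linear_combination -h
      exact (hshape x hx).1 (by rw [this]; exact hXR hx)
  · push Not at hgap
    have hA2 : ∀ a ∈ A, a - 2 ∉ R ∧ a + 2 ∉ R := by
      rintro _ ⟨x, hx, rfl⟩
      refine ⟨?_, by rw [show x + 1 + 2 = x + 3 by ring]; exact (hshape x hx).2.1⟩
      rw [show x + 1 - 2 = x - 1 by ring]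
      exact (hshape x hx).2.2.resolve_right (not_not.mpr (hgap x hx))
    have hnotuniv : ∀ T ⊆ Rᶜ, T ≠ Set.univ := fun T hT hTu =>
      hT (hTu ▸ Set.mem_univ x₀) (hXR hx₀)
    obtain ⟨a, ha, hb⟩ : ∃ a ∈ A, a - 2 ∉ A := by
      by_contra! h
      refine hnotuniv A hA (ZMod.eq_univ_of_add_mem htwo.neg ((hAmem (x₀ + 1)).mpr (by simpa)) ?_)
      simpa [← sub_eq_add_neg] using h
    have hb' : a - 2 ∈ Rᶜ \ A := ⟨(hA2 a ha).1, hb⟩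
    by_contra! hB
    refine hnotuniv Rᶜ le_rfl (ZMod.eq_univ_of_add_mem htwo hb'.1 fun s hs => ?_)
    by_cases hsA : s ∈ A
    · exact (hA2 s hsA).2
    · rw [← hB (a - 2) s hb' ⟨hs, hsA⟩, sub_add_cancel]
      exact hA ha

lemma numComp_add_two_le_ncard {n : ℕ} (hn : Odd n) (h3 : 3 < n) {S : Set (ZMod n)}
    (hS : IsVertexCut (circGraph n {1, 3}) S) : numComp (circGraph n {1, 3}) S + 2 ≤ S.ncard := by
  have : NeZero n := ⟨by omega⟩
  have hS' : 1 < numComp _ S := hS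
  have hc : numComp _ S ≤ _ := card_connectedComponent_le_ncard_isExit hS
  have hX := ncard_add_two_le_ncard_compl hn (X := {x | IsExit _ Sᶜ x})
    (Set.nonempty_of_ncard_ne_zero (by omega))
    (fun x hx => IsExit.mem hx) (fun x hx => IsExit.shape_circGraph h3 hx)
  rw [compl_compl] at hX
  omega

lemma circGraph_adj_natCast_two_mul_iff {k i j : ℕ} (hk : 2 ≤ k) (hi : i < k) (hj : j < k) :
    (circGraph (2 * k + 1) {1, 3}).Adj ((2 * i : ℕ) : ZMod (2 * k + 1)) ((2 * j : ℕ) : ZMod _) ↔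
      (i = 0 ∧ j = k - 1) ∨ (i = k - 1 ∧ j = 0) := by
  have h1 : (1 : ZMod (2 * k + 1)) = ((1 : ℕ) : ZMod _) := Nat.cast_one.symm
  have h3 : (3 : ZMod (2 * k + 1)) = ((3 : ℕ) : ZMod _) := by norm_cast
  simp only [circGraph, Set.mem_insert_iff, Set.mem_singleton_iff, sub_eq_iff_eq_add, ne_eq, h1, h3,
    ← Nat.cast_add]
  simp (disch := omega) only [ZMod.natCast_eq_natCast_iff_of_lt]
  omega

def evens (k : ℕ) : Set (ZMod (2 * k + 1)) :=
  (fun i : ℕ => ((2 * i : ℕ) : ZMod (2 * k + 1))) '' Set.Iio k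

lemma ncard_compl_evens (k : ℕ) : (evens k)ᶜ.ncard = k + 1 := by
  have hcard : (evens k).ncard = k := by
    rw [evens, Set.InjOn.ncard_image, Set.ncard_Iio_nat]
    intro i hi j hj hij
    have := (ZMod.natCast_eq_natCast_iff_of_lt (by simp at hi; omega) (by simp at hj; omega)).mp hij
    omega
  have := Set.ncard_add_ncard_compl (evens k)
  rw [Nat.card_zmod] at this
  omega

lemma val_natCast_two_mul_div_two {k i : ℕ} (hi : i < k) :
    ((2 * i : ℕ) : ZMod (2 * k + 1)).val / 2 = i := by
  rw [ZMod.val_cast_of_lt (by omega)]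
  omega

lemma numComp_compl_evens {k : ℕ} (hk : 3 ≤ k) :
    numComp (circGraph (2 * k + 1) {1, 3}) (evens k)ᶜ = k - 1 := by
  rw [numComp, compl_compl]
  have : NeZero (k - 1) := ⟨by omega⟩
  have hmod : ∀ i < k, i % (k - 1) = if i = k - 1 then 0 else i := by
    intro i hi
    split_ifs with h
    · rw [h, Nat.mod_self]
    · exact Nat.mod_eq_of_lt (by omega)
  -- The component of `2 * i` is indexed by `i` mod `k - 1`: only `0` and `2 * (k - 1)` are joined.
  refine (card_connectedComponent_eq_of_fibers
    (f := fun v : evens k => ((v.1.val / 2 : ℕ) : ZMod (k - 1))) ?_ ?_ ?_).trans (Nat.card_zmod _)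
  · intro r
    have hr : r.val < k := by have := ZMod.val_lt r; omega
    refine ⟨⟨_, r.val, hr, rfl⟩, ?_⟩
    change ((((2 * r.val : ℕ) : ZMod (2 * k + 1)).val / 2 : ℕ) : ZMod (k - 1)) = r
    rw [val_natCast_two_mul_div_two hr, ZMod.natCast_zmod_val]
  · rintro ⟨_, i, hi, rfl⟩ ⟨_, j, hj, rfl⟩ hadj
    rw [induce_adj, circGraph_adj_natCast_two_mul_iff (by omega) hi hj] at hadj
    simp only [val_natCast_two_mul_div_two hi, val_natCast_two_mul_div_two hj]
    rcases hadj with ⟨rfl, rfl⟩ | ⟨rfl, rfl⟩ <;> simp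
  · rintro ⟨_, i, hi, rfl⟩ ⟨_, j, hj, rfl⟩ hij
    simp only [val_natCast_two_mul_div_two hi, val_natCast_two_mul_div_two hj,
      ZMod.natCast_eq_natCast_iff', hmod i hi, hmod j hj] at hij
    by_cases hij' : i = j
    · subst hij'; rfl
    · refine Adj.reachable ?_
      rw [induce_adj, circGraph_adj_natCast_two_mul_iff (by omega) hi hj]
      split_ifs at hij <;> omega

lemma add_one_div_sub_one_le_div {c s k : ℕ} (hc : 0 < c) (hs : c + 2 ≤ s)
    (hcs : c + s ≤ 2 * k + 1) :
    ((k : ℝ) + 1) / ((k : ℝ) - 1) ≤ s / c := by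
  have hck : (c : ℝ) + 1 ≤ k := by exact_mod_cast (by omega : c + 1 ≤ k)
  have hs' : (c : ℝ) + 2 ≤ s := by exact_mod_cast hs
  have hc' : (0 : ℝ) < c := by exact_mod_cast hc
  rw [div_le_div_iff₀ (by linarith) hc']
  nlinarith

theorem stmt4 (k : ℕ) (hk : 3 ≤ k) :
    toughness (circGraph (2*k+1) {1, 3}) = ((k : ℝ) + 1) / ((k : ℝ) - 1) := by
  refine IsLeast.csInf_eq ⟨⟨(evens k)ᶜ, ?_, ?_⟩, ?_⟩
  · change 1 < numComp _ _
    rw [numComp_compl_evens hk]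
    omega
  · rw [numComp_compl_evens hk, ncard_compl_evens, Nat.cast_sub (by omega)]
    push_cast
    ring
  · rintro _ ⟨S, hS, rfl⟩
    have hcut : 1 < numComp _ S := hS
    have hcs := numComp_add_ncard_le (circGraph (2 * k + 1) {1, 3}) S
    rw [Nat.card_zmod] at hcs
    exact add_one_div_sub_one_le_div (by omega)
      (numComp_add_two_le_ncard (odd_two_mul_add_one k) (by omega) hS) hcs
end

section
/- Let k ≥ 3 and G = C(2k+1; {1,3}), and let e = v_1 v_2 be an edge of the Hamilton cycle. Then the set S = {v_{2i+1} : 1 ≤ i ≤ k} is a vertex cut of G−e with |S| = k and c((G−e)−S) = k−1; consequently τ(G−e) ≤ k/(k−1) < (k+1)/(k−1). -/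
open SimpleGraph

/-!
Outside `S` only the vertex `1` and the even residues `2, 4, …, 2k` survive. A difference
`±1` or `±3 (mod 2k+1)` between two even residues in `[2, 2k]` only occurs across the
wrap-around, as `2 - 2k ≡ 3`, and `1` is adjacent to `2` and `4`, the edge to `2` being the
deleted one. So `(G - e) - S` has `k + 1` vertices and just the two disjoint edges `1 4` and
`2 2k`, hence `k - 1` components.
-/

namespace SimpleGraph

variable {V α : Type*} {G : SimpleGraph V}

lemma Reachable.eq_of_forall_adj_eq {f : V → α} (hadj : ∀ v w, G.Adj v w → f v = f w)
    {v w : V} (h : G.Reachable v w) : f v = f w := by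
  obtain ⟨p⟩ := h
  induction p with
  | nil => rfl
  | cons hvw _ ih => exact (hadj _ _ hvw).trans ih

lemma card_connectedComponent_eq_card_range (f : V → α)
    (hadj : ∀ v w, G.Adj v w → f v = f w) (hreach : ∀ v w, f v = f w → G.Reachable v w) :
    Nat.card G.ConnectedComponent = Nat.card (Set.range f) := by
  let F : G.ConnectedComponent → Set.range f :=
    ConnectedComponent.lift (fun v => ⟨f v, v, rfl⟩)
      fun v w p _ => Subtype.ext (Reachable.eq_of_forall_adj_eq hadj ⟨p⟩)
  refine Nat.card_eq_of_bijective F ⟨?_, ?_⟩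
  · refine ConnectedComponent.ind₂ fun v w hvw => ConnectedComponent.sound ?_
    exact hreach v w (congrArg Subtype.val hvw)
  · rintro ⟨_, v, rfl⟩
    exact ⟨G.connectedComponentMk v, rfl⟩

end SimpleGraph

lemma toughness_le_of_isVertexCut {V : Type*} {G : SimpleGraph V} {S : Set V}
    (hS : IsVertexCut G S) : toughness G ≤ S.ncard / numComp G S :=
  csInf_le ⟨0, by rintro x ⟨T, -, rfl⟩; positivity⟩ ⟨S, hS, rfl⟩

namespace ZMod

variable {n : ℕ} [NeZero n]

lemma eq_natCast_iff_val_eq {x : ZMod n} {m : ℕ} (hm : m < n) : x = m ↔ x.val = m := by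
  rw [← (val_injective n).eq_iff, val_natCast_of_lt hm]

lemma eq_add_natCast_iff_val {x y : ZMod n} {d : ℕ} (hd : d < n) :
    x = y + d ↔ x.val = y.val + d ∨ x.val + n = y.val + d := by
  have hdv : (d : ZMod n).val = d := val_natCast_of_lt hd
  have hx := x.val_lt
  rw [← (val_injective n).eq_iff]
  rcases lt_or_ge (y.val + d) n with h | h
  · rw [val_add_of_lt (by rwa [hdv]), hdv]
    omega
  · rw [val_add_of_le (by rwa [hdv]), hdv]
    omega

end ZMod

/-- For `a, b < n`: `a ≡ b + 1` or `a ≡ b + 3 (mod n)`. -/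
def CircStep (n a b : ℕ) : Prop :=
  a = b + 1 ∨ a = b + 3 ∨ a + n = b + 1 ∨ a + n = b + 3

lemma circGraph_one_three_adj_iff {n : ℕ} [NeZero n] (hn : 3 < n) {x y : ZMod n} :
    (circGraph n {1, 3}).Adj x y ↔
      x.val ≠ y.val ∧ (CircStep n x.val y.val ∨ CircStep n y.val x.val) := by
  have hstep : ∀ a b : ZMod n, a - b ∈ ({1, 3} : Set (ZMod n)) ↔ CircStep n a.val b.val := by
    intro a b
    have h1 : (1 : ZMod n) = ((1 : ℕ) : ZMod n) := Nat.cast_one.symm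
    have h3 : (3 : ZMod n) = ((3 : ℕ) : ZMod n) := Nat.cast_ofNat.symm
    rw [Set.mem_insert_iff, Set.mem_singleton_iff, sub_eq_iff_eq_add, sub_eq_iff_eq_add,
      add_comm, add_comm (3 : ZMod n), h1, h3, ZMod.eq_add_natCast_iff_val (by omega),
      ZMod.eq_add_natCast_iff_val (by omega), CircStep]
    tauto
  simp only [circGraph, hstep, ne_eq, (ZMod.val_injective n).eq_iff]

section OddCut

variable {k : ℕ}

def oddCut (k : ℕ) : Set (ZMod (2*k+1)) :=
  {v | ∃ i : ℕ, 1 ≤ i ∧ i ≤ k ∧ v = ((2*i+1 : ℕ) : ZMod (2*k+1))}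

def circMinusEdge (k : ℕ) : SimpleGraph (ZMod (2*k+1)) :=
  (circGraph (2*k+1) {1, 3}).deleteEdges
    {s(((1 : ℕ) : ZMod (2*k+1)), ((2 : ℕ) : ZMod (2*k+1)))}

def CutAdj (k a b : ℕ) : Prop :=
  a ≠ b ∧ (CircStep (2*k+1) a b ∨ CircStep (2*k+1) b a) ∧ ¬(a = 1 ∧ b = 2 ∨ a = 2 ∧ b = 1)

lemma circMinusEdge_adj_iff (hk : 2 ≤ k) {x y : ZMod (2*k+1)} :
    (circMinusEdge k).Adj x y ↔ CutAdj k x.val y.val := by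
  rw [circMinusEdge, deleteEdges_adj, circGraph_one_three_adj_iff (by omega),
    Set.mem_singleton_iff, Sym2.eq_iff, ZMod.eq_natCast_iff_val_eq (by omega),
    ZMod.eq_natCast_iff_val_eq (by omega), ZMod.eq_natCast_iff_val_eq (by omega),
    ZMod.eq_natCast_iff_val_eq (by omega), CutAdj, and_assoc]

lemma mem_oddCut_compl_iff (hk : 1 ≤ k) {x : ZMod (2*k+1)} :
    x ∈ (oddCut k)ᶜ ↔ x.val = 1 ∨ (x.val ≠ 0 ∧ x.val % 2 = 0) := by
  have hx := x.val_lt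
  suffices x ∈ oddCut k ↔ x.val = 0 ∨ (x.val % 2 = 1 ∧ 3 ≤ x.val) by
    rw [Set.mem_compl_iff, this]
    omega
  constructor
  · rintro ⟨i, hi1, hik, rfl⟩
    rcases hik.eq_or_lt with rfl | hik
    · exact Or.inl (by rw [ZMod.natCast_self, ZMod.val_zero])
    · rw [ZMod.val_natCast_of_lt (by omega)]
      omega
  · rintro (h0 | ⟨hodd, h3⟩)
    · exact ⟨k, hk, le_rfl, by rw [ZMod.natCast_self, ← ZMod.val_eq_zero, h0]⟩
    · exact ⟨x.val / 2, by omega, by omega, by rw [ZMod.eq_natCast_iff_val_eq (by omega)]; omega⟩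

lemma ncard_oddCut : (oddCut k).ncard = k := by
  have himage : oddCut k = (fun i : ℕ => ((2*i+1 : ℕ) : ZMod (2*k+1))) '' Set.Icc 1 k := by
    ext v
    simp only [oddCut, Set.mem_ofPred_eq, Set.mem_image, Set.mem_Icc, and_assoc, eq_comm]
  rw [himage, Set.InjOn.ncard_image, Set.ncard_Icc_nat, Nat.add_sub_cancel]
  rintro i ⟨-, hi⟩ j ⟨-, hj⟩ hij
  have := ((ZMod.natCast_eq_natCast_iff _ _ _).1 hij).add_right_cancel' 1
  have := this.eq_of_lt_of_lt (by omega) (by omega)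
  omega

/-- The components of `(circMinusEdge k) - oddCut k` are `{1, 4}`, `{2, 2k}` and the singletons
`{6}, {8}, …, {2k - 2}`; this numbers them `0, …, k - 2`. -/
def componentIndex (k a : ℕ) : ℕ :=
  if a = 1 ∨ a = 4 then 0 else if a = 2 ∨ a = 2*k then 1 else a / 2 - 1

lemma componentIndex_eq_iff (hk : 3 ≤ k) {a b : ℕ} (ha : a < 2*k+1) (hb : b < 2*k+1)
    (ha' : a = 1 ∨ (a ≠ 0 ∧ a % 2 = 0)) (hb' : b = 1 ∨ (b ≠ 0 ∧ b % 2 = 0)) :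
    componentIndex k a = componentIndex k b ↔ a = b ∨ CutAdj k a b := by
  unfold componentIndex CutAdj CircStep
  split_ifs <;> (try rw [false_iff]) <;> omega

lemma componentIndex_lt (hk : 3 ≤ k) {a : ℕ} (ha : a < 2*k+1) :
    componentIndex k a < k - 1 := by
  unfold componentIndex
  split_ifs <;> omega

lemma exists_componentIndex_eq (hk : 3 ≤ k) {m : ℕ} (hm : m < k - 1) :
    ∃ a < 2*k+1, (a = 1 ∨ (a ≠ 0 ∧ a % 2 = 0)) ∧ componentIndex k a = m := by
  refine ⟨if m ≤ 1 then m + 1 else 2*m + 2, ?_, ?_, ?_⟩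
  · split_ifs <;> omega
  · split_ifs <;> omega
  · unfold componentIndex
    split_ifs <;> omega

lemma numComp_circMinusEdge_oddCut (hk : 3 ≤ k) :
    numComp (circMinusEdge k) (oddCut k) = k - 1 := by
  have hcompl (v : ↥(oddCut k)ᶜ) := (mem_oddCut_compl_iff (by omega)).1 v.2
  let index (v : ↥(oddCut k)ᶜ) : ℕ := componentIndex k v.1.val
  have hrange : Set.range index = Set.Iio (k - 1) := by
    ext m
    constructor
    · rintro ⟨v, rfl⟩
      exact componentIndex_lt hk v.1.val_lt
    · intro hm
      obtain ⟨a, ha, ha', rfl⟩ := exists_componentIndex_eq hk hm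
      have hval : ((a : ℕ) : ZMod (2*k+1)).val = a := ZMod.val_natCast_of_lt ha
      refine ⟨⟨a, (mem_oddCut_compl_iff (by omega)).2 (by rwa [hval])⟩, ?_⟩
      simp only [index, hval]
  have hindex {v w : ↥(oddCut k)ᶜ} :
      index v = index w ↔ v = w ∨ ((circMinusEdge k).induce (oddCut k)ᶜ).Adj v w := by
    rw [comap_adj, circMinusEdge_adj_iff (by omega), Subtype.ext_iff,
      ← (ZMod.val_injective _).eq_iff]
    exact componentIndex_eq_iff hk v.1.val_lt w.1.val_lt (hcompl v) (hcompl w)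
  rw [numComp, card_connectedComponent_eq_card_range index
      (fun v w h => hindex.2 (Or.inr h)), hrange, Nat.card_coe_set_eq, Set.ncard_Iio_nat]
  intro v w h
  rcases hindex.1 h with rfl | hvw
  · rfl
  · exact hvw.reachable

end OddCut

theorem stmt5 (k : ℕ) (hk : 3 ≤ k) :
    let G := circGraph (2*k+1) {1, 3}
    let G' := G.deleteEdges {s(((1 : ℕ) : ZMod (2*k+1)), ((2 : ℕ) : ZMod (2*k+1)))}
    let S : Set (ZMod (2*k+1)) :=
      {v | ∃ i : ℕ, 1 ≤ i ∧ i ≤ k ∧ v = ((2*i+1 : ℕ) : ZMod (2*k+1))}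
    IsVertexCut G' S ∧ S.ncard = k ∧ numComp G' S = k - 1 ∧
      toughness G' ≤ (k : ℝ) / ((k : ℝ) - 1) ∧
      (k : ℝ) / ((k : ℝ) - 1) < ((k : ℝ) + 1) / ((k : ℝ) - 1) := by
  intro G G' S
  have hnum : numComp G' S = k - 1 := numComp_circMinusEdge_oddCut hk
  have hcut : IsVertexCut G' S := by
    rw [IsVertexCut, hnum]
    omega
  have hcard : S.ncard = k := ncard_oddCut
  have hk' : (3 : ℝ) ≤ k := by exact_mod_cast hk
  refine ⟨hcut, hcard, hnum, ?_, ?_⟩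
  · calc toughness G' ≤ S.ncard / numComp G' S := toughness_le_of_isVertexCut hcut
      _ = k / (k - 1) := by rw [hcard, hnum, Nat.cast_sub (by omega), Nat.cast_one]
  · exact div_lt_div_of_pos_right (by linarith) (by linarith)
end
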